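/- Let σ be an alternating bilinear form on V that tames J, and let K : V → V be a linear map with K ∘ K = −id whose operator norm distance to J satisfies ‖K − J‖ · β(σ) < α(σ) (i.e. ‖K − J‖ < γ(σ)). Then σ tames K, i.e. σ(x, Kx) > 0 for every x ≠ 0. -/

import Mathlib

/-- `α(σ) = inf{σ(x,Jx) : ‖x‖ = 1}` for a bilinear form `σ` and `J : V → V`. -/
noncomputable def alphaT {V : Type*} [NormedAddCommGroup V] [InnerProductSpace ℝ V]
    (J : V → V) (σ : V →ₗ[ℝ] V →ₗ[ℝ] ℝ) : ℝ :=
  sInf {r : ℝ | ∃ x : V, ‖x‖ = 1 ∧ r = σ x (J x)}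

/-- `β(σ) = sup{σ(x,y)/√(‖x‖²‖y‖² − ⟨x,y⟩²) : x, y linearly independent}`. -/
noncomputable def betaT {V : Type*} [NormedAddCommGroup V] [InnerProductSpace ℝ V]
    (σ : V →ₗ[ℝ] V →ₗ[ℝ] ℝ) : ℝ :=
  sSup {r : ℝ | ∃ x y : V, LinearIndependent ℝ ![x, y] ∧
    r = σ x y / Real.sqrt (‖x‖ ^ 2 * ‖y‖ ^ 2 - (inner ℝ x y : ℝ) ^ 2)}

/-- `γ(σ) = α(σ)/β(σ)`. -/
noncomputable def gammaT {V : Type*} [NormedAddCommGroup V] [InnerProductSpace ℝ V]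
    (J : V → V) (σ : V →ₗ[ℝ] V →ₗ[ℝ] ℝ) : ℝ :=
  alphaT J σ / betaT σ

/-!
Write `σ x (K x) = σ x (J x) - σ ((K - J) x) x`. The first term is at least `α(σ) ‖x‖²` by
definition of `α`. For the second, `β(σ)` bounds `σ` by the area `√(‖a‖²‖b‖² - ⟪a, b⟫²)` of the
parallelogram spanned by `a` and `b`, hence by `‖a‖ ‖b‖`, so it is at most
`β(σ) ‖K - J‖ ‖x‖²`. In finite dimension `σ` is bounded, which makes `β(σ)` an honest supremum.
-/

section Gram

variable {V : Type*} [NormedAddCommGroup V] [InnerProductSpace ℝ V]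

def gramDet (a b : V) : ℝ := ‖a‖ ^ 2 * ‖b‖ ^ 2 - inner ℝ a b ^ 2

lemma gramDet_comm (a b : V) : gramDet a b = gramDet b a := by
  rw [gramDet, gramDet, real_inner_comm, mul_comm]

lemma gramDet_le (a b : V) : gramDet a b ≤ (‖a‖ * ‖b‖) ^ 2 := by
  rw [gramDet, mul_pow]
  linarith [sq_nonneg (inner ℝ a b)]

lemma gramDet_eq_sq_norm_mul_norm_sub_proj {a : V} (ha : a ≠ 0) (b : V) :
    gramDet a b = (‖a‖ * ‖b - (inner ℝ a b / ‖a‖ ^ 2) • a‖) ^ 2 := by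
  have hna : ‖a‖ ≠ 0 := norm_ne_zero_iff.mpr ha
  rw [gramDet, mul_pow, norm_sub_sq_real, real_inner_smul_right, real_inner_comm, norm_smul,
    mul_pow, Real.norm_eq_abs, sq_abs]
  field_simp
  ring

lemma sub_proj_ne_zero {a b : V} (hli : LinearIndependent ℝ ![a, b]) :
    b - (inner ℝ a b / ‖a‖ ^ 2) • a ≠ 0 := fun h =>
  (LinearIndependent.pair_iff' (hli.ne_zero 0)).mp hli _ (sub_eq_zero.mp h).symm

lemma gramDet_pos {a b : V} (hli : LinearIndependent ℝ ![a, b]) : 0 < gramDet a b := by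
  have ha : a ≠ 0 := hli.ne_zero 0
  rw [gramDet_eq_sq_norm_mul_norm_sub_proj ha]
  have := norm_pos_iff.mpr ha
  have := norm_pos_iff.mpr (sub_proj_ne_zero hli)
  positivity

end Gram

section AlternatingForm

variable {V : Type*} [NormedAddCommGroup V] [InnerProductSpace ℝ V]
  {σ : V →ₗ[ℝ] V →ₗ[ℝ] ℝ}

lemma apply_swap_of_alt (halt : ∀ x, σ x x = 0) (a b : V) : σ a b = -σ b a := by
  have h := halt (a + b)
  simp only [map_add, LinearMap.add_apply, halt] at h
  linarith

lemma apply_eq_zero_of_not_linearIndependent (halt : ∀ x, σ x x = 0) {a b : V}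
    (h : ¬LinearIndependent ℝ ![a, b]) : σ a b = 0 := by
  rw [LinearIndependent.pair_iff] at h
  push Not at h
  obtain ⟨s, t, hst, hne⟩ := h
  have hsa : s * σ b a = 0 := by
    simpa [halt] using congrArg (σ b) hst
  have htb : t * σ a b = 0 := by
    simpa [halt] using congrArg (σ a) hst
  by_cases ht : t = 0
  · rw [apply_swap_of_alt halt, (mul_eq_zero.mp hsa).resolve_left fun hs => hne hs ht, neg_zero]
  · exact (mul_eq_zero.mp htb).resolve_left ht

lemma linearIndependent_of_apply_ne_zero (halt : ∀ x, σ x x = 0) {a b : V} (h : σ a b ≠ 0) :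
    LinearIndependent ℝ ![a, b] :=
  not_not.mp (mt (apply_eq_zero_of_not_linearIndependent halt) h)

variable [FiniteDimensional ℝ V]

/-- Replacing `b` by its component orthogonal to `a` leaves `σ a b` unchanged and turns
`‖a‖ * ‖b‖` into `√(gramDet a b)`. -/
lemma apply_le_opNorm_mul_sqrt_gramDet (halt : ∀ x, σ x x = 0) {a b : V}
    (hli : LinearIndependent ℝ ![a, b]) :
    σ a b ≤ ‖σ.toContinuousBilinearMap‖ * √(gramDet a b) := by
  have ha : a ≠ 0 := hli.ne_zero 0
  set z := b - (inner ℝ a b / ‖a‖ ^ 2) • a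
  have hσz : σ a b = σ a z := by simp [z, halt]
  rw [gramDet_eq_sq_norm_mul_norm_sub_proj ha, Real.sqrt_sq (by positivity), hσz,
    ← mul_assoc]
  exact (le_abs_self _).trans (σ.toContinuousBilinearMap.le_opNorm₂ a z)

lemma div_sqrt_gramDet_le_betaT (halt : ∀ x, σ x x = 0) {a b : V}
    (hli : LinearIndependent ℝ ![a, b]) : σ a b / √(gramDet a b) ≤ betaT σ := by
  refine le_csSup ⟨‖σ.toContinuousBilinearMap‖, ?_⟩ ⟨a, b, hli, rfl⟩
  rintro r ⟨x, y, hxy, rfl⟩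
  change σ x y / √(gramDet x y) ≤ _
  rw [div_le_iff₀ (Real.sqrt_pos.mpr (gramDet_pos hxy))]
  exact apply_le_opNorm_mul_sqrt_gramDet halt hxy

lemma apply_le_betaT_mul_sqrt_gramDet (halt : ∀ x, σ x x = 0) {a b : V}
    (hli : LinearIndependent ℝ ![a, b]) : σ a b ≤ betaT σ * √(gramDet a b) :=
  (div_le_iff₀ (Real.sqrt_pos.mpr (gramDet_pos hli))).mp (div_sqrt_gramDet_le_betaT halt hli)

lemma betaT_nonneg (halt : ∀ x, σ x x = 0) {a b : V} (hli : LinearIndependent ℝ ![a, b]) :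
    0 ≤ betaT σ := by
  have hab := apply_le_betaT_mul_sqrt_gramDet halt hli
  have hba := apply_le_betaT_mul_sqrt_gramDet halt (LinearIndependent.pair_symm_iff.mp hli)
  rw [apply_swap_of_alt halt b a, gramDet_comm] at hba
  exact nonneg_of_mul_nonneg_left (by linarith) (Real.sqrt_pos.mpr (gramDet_pos hli))

lemma apply_le_betaT_mul_norm_mul_norm (halt : ∀ x, σ x x = 0) (hβ : 0 ≤ betaT σ) (a b : V) :
    σ a b ≤ betaT σ * (‖a‖ * ‖b‖) := by
  by_cases hli : LinearIndependent ℝ ![a, b]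
  · calc σ a b ≤ betaT σ * √(gramDet a b) := apply_le_betaT_mul_sqrt_gramDet halt hli
      _ ≤ betaT σ * (‖a‖ * ‖b‖) := by
        gcongr
        exact Real.sqrt_le_iff.mpr ⟨by positivity, gramDet_le a b⟩
  · rw [apply_eq_zero_of_not_linearIndependent halt hli]
    positivity

end AlternatingForm

lemma alphaT_mul_sq_norm_le {V : Type*} [NormedAddCommGroup V] [InnerProductSpace ℝ V]
    {J : V →ₗ[ℝ] V} {σ : V →ₗ[ℝ] V →ₗ[ℝ] ℝ} (hJ : ∀ x, 0 ≤ σ x (J x)) (x : V) :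
    alphaT J σ * ‖x‖ ^ 2 ≤ σ x (J x) := by
  rcases eq_or_ne x 0 with rfl | hx
  · simp
  have hnx : ‖x‖ ≠ 0 := norm_ne_zero_iff.mpr hx
  have hα : alphaT J σ ≤ σ (‖x‖⁻¹ • x) (J (‖x‖⁻¹ • x)) :=
    csInf_le ⟨0, by rintro r ⟨u, -, rfl⟩; exact hJ u⟩ ⟨_, norm_smul_inv_norm hx, rfl⟩
  simp only [map_smul, LinearMap.smul_apply, smul_eq_mul] at hα
  calc alphaT J σ * ‖x‖ ^ 2 ≤ ‖x‖⁻¹ * (‖x‖⁻¹ * σ x (J x)) * ‖x‖ ^ 2 := by gcongr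
    _ = σ x (J x) := by field_simp

theorem stmt15_general {V : Type*} [NormedAddCommGroup V] [InnerProductSpace ℝ V]
    [FiniteDimensional ℝ V]
    (J K : V →L[ℝ] V)
    (σ : V →ₗ[ℝ] V →ₗ[ℝ] ℝ) (halt : ∀ x : V, σ x x = 0)
    (htame : ∀ x : V, x ≠ 0 → 0 < σ x (J x))
    (hnorm : ‖K - J‖ * betaT σ < alphaT (⇑J) σ) :
    ∀ x : V, x ≠ 0 → 0 < σ x (K x) := by
  intro x hx
  have hβ : 0 ≤ betaT σ :=
    betaT_nonneg halt (linearIndependent_of_apply_ne_zero halt (htame x hx).ne')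
  have hJ : ∀ y, 0 ≤ σ y (J y) := fun y =>
    (eq_or_ne y 0).elim (fun hy => by simp [hy]) fun hy => (htame y hy).le
  have hα : alphaT J σ * ‖x‖ ^ 2 ≤ σ x (J x) :=
    alphaT_mul_sq_norm_le (J := (J : V →ₗ[ℝ] V)) hJ x
  have hpert : σ ((K - J) x) x ≤ ‖K - J‖ * betaT σ * ‖x‖ ^ 2 :=
    calc σ ((K - J) x) x ≤ betaT σ * (‖(K - J) x‖ * ‖x‖) :=
          apply_le_betaT_mul_norm_mul_norm halt hβ _ _
      _ ≤ betaT σ * (‖K - J‖ * ‖x‖ * ‖x‖) := by gcongr; exact (K - J).le_opNorm x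
      _ = ‖K - J‖ * betaT σ * ‖x‖ ^ 2 := by ring
  have hx2 : 0 < ‖x‖ ^ 2 := by positivity
  calc 0 < (alphaT J σ - ‖K - J‖ * betaT σ) * ‖x‖ ^ 2 := mul_pos (sub_pos.mpr hnorm) hx2
    _ ≤ σ x (J x) - σ ((K - J) x) x := by linarith
    _ = σ x (K x) := by
      rw [apply_swap_of_alt halt ((K - J) x)]
      simp

theorem stmt15 {V : Type*} [NormedAddCommGroup V] [InnerProductSpace ℝ V]
    [FiniteDimensional ℝ V]
    (J K : V →L[ℝ] V)
    (hiso : ∀ x : V, ‖J x‖ = ‖x‖) (hJsq : ∀ x : V, J (J x) = -x)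
    (hKsq : ∀ x : V, K (K x) = -x)
    (σ : V →ₗ[ℝ] V →ₗ[ℝ] ℝ) (halt : ∀ x : V, σ x x = 0)
    (htame : ∀ x : V, x ≠ 0 → 0 < σ x (J x))
    (hnorm : ‖K - J‖ * betaT σ < alphaT (⇑J) σ) :
    ∀ x : V, x ≠ 0 → 0 < σ x (K x) :=
  stmt15_general J K σ halt htame hnorm
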